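/- Let X and S be measurable spaces, ν a finite measure on S, κ a measurable family (kernel) of finite measures κ_s on X indexed by s ∈ S, and let μ = ∫_S κ_s ν(ds) be the mixture measure on X. Let H be a separable real Hilbert space, D a linear subspace of real-valued functions on X, and G : D → (X → H) a linear map such that φ and Gφ are measurable for every φ ∈ D. For a measure λ on X, call a sequence (φ_j) in D λ-admissible if each φ_j ∈ L²(λ), each ∫_X ‖Gφ_j‖² dλ < ∞, lim_{j,k→∞} ∫_X ‖G(φ_j − φ_k)‖² dλ = 0 and lim_{j→∞} ∫_X φ_j² dλ = 0. Assume that for ν-almost every s ∈ S, every κ_s-admissible sequence (φ_j) satisfies lim_{j→∞} ∫_X ‖Gφ_j‖² dκ_s = 0. Then every μ-admissible sequence (φ_j) satisfies lim_{j→∞} ∫_X ‖Gφ_j‖² dμ = 0. -/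

import Mathlib

open MeasureTheory Filter

open scoped ENNReal

section auxclos
open ENNReal

variable {X : Type*} [MeasurableSpace X] {H : Type*} [NormedAddCommGroup H]
  {lam : Measure X}
lemma aux_ofReal_sq (r : ℝ) : ENNReal.ofReal (r ^ 2) = (‖r‖₊ : ℝ≥0∞) ^ 2 := by
  rw [← sq_abs, ← Real.norm_eq_abs, ENNReal.ofReal_pow (norm_nonneg r), ofReal_norm, enorm_eq_nnnorm]
lemma aux_ofReal_norm_sq (v : H) : ENNReal.ofReal (‖v‖ ^ 2) = (‖v‖₊ : ℝ≥0∞) ^ 2 := by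
  rw [ENNReal.ofReal_pow (norm_nonneg v), ofReal_norm, enorm_eq_nnnorm]
lemma aux_nnnorm_sq (v : H) : (‖(‖v‖ ^ 2 : ℝ)‖₊ : ℝ≥0∞) = (‖v‖₊ : ℝ≥0∞) ^ 2 := by
  rw [← enorm_eq_nnnorm, ← ofReal_norm, Real.norm_eq_abs, abs_of_nonneg (sq_nonneg _),
    aux_ofReal_norm_sq]
lemma aux_integral_norm_sq (f : X → H) (hf : AEStronglyMeasurable f lam) :
    ∫ x, ‖f x‖ ^ 2 ∂lam = (∫⁻ x, (‖f x‖₊ : ℝ≥0∞) ^ 2 ∂lam).toReal := by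
  rw [integral_eq_lintegral_of_nonneg_ae (Eventually.of_forall fun x => sq_nonneg _)
    (hf.norm.pow 2)]
  congr 1
  exact lintegral_congr fun x => aux_ofReal_norm_sq _
lemma aux_integral_sq (f : X → ℝ) (hf : AEStronglyMeasurable f lam) :
    ∫ x, f x ^ 2 ∂lam = (∫⁻ x, (‖f x‖₊ : ℝ≥0∞) ^ 2 ∂lam).toReal := by
  rw [integral_eq_lintegral_of_nonneg_ae (Eventually.of_forall fun x => sq_nonneg _)
    (hf.pow 2)]
  congr 1
  exact lintegral_congr fun x => aux_ofReal_sq _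
lemma aux_eLpNorm_sq (f : X → H) :
    (eLpNorm f 2 lam) ^ 2 = ∫⁻ x, (‖f x‖₊ : ℝ≥0∞) ^ 2 ∂lam := by
  rw [eLpNorm_eq_lintegral_rpow_enorm_toReal (by norm_num) (by norm_num)]
  rw [← ENNReal.rpow_natCast _ 2, ← ENNReal.rpow_mul]
  norm_num; rfl
lemma aux_sq_add_le (a b : ℝ≥0∞) : (a + b) ^ 2 ≤ 4 * a ^ 2 + 4 * b ^ 2 := by
  rcases le_total a b with h | h
  · calc (a + b) ^ 2 ≤ (b + b) ^ 2 := by gcongr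
      _ = 4 * b ^ 2 := by ring
      _ ≤ _ := le_add_self
  · calc (a + b) ^ 2 ≤ (a + a) ^ 2 := by gcongr
      _ = 4 * a ^ 2 := by ring
      _ ≤ _ := le_self_add
lemma aux_ne_top_of_sq {x : ℝ≥0∞} (h : x ^ 2 ≠ ⊤) : x ≠ ⊤ := by
  intro hx; exact h (by rw [hx]; simp [pow_two])
lemma aux_le_of_sq_le_sq {x y : ℝ≥0∞} (h : x ^ 2 ≤ y ^ 2) : x ≤ y := by
  have h2 : (x ^ 2) ^ ((1 : ℝ)/2) ≤ (y ^ 2) ^ ((1 : ℝ)/2) :=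
    ENNReal.rpow_le_rpow h (by norm_num)
  have hx : ∀ z : ℝ≥0∞, (z ^ 2) ^ ((1 : ℝ)/2) = z := fun z => by
    rw [← ENNReal.rpow_natCast z 2, ← ENNReal.rpow_mul]; norm_num
  rwa [hx, hx] at h2
lemma aux_energy_triangle (f h : X → H) (hf : AEStronglyMeasurable f lam)
    (hh : AEStronglyMeasurable h lam) :
    ∫⁻ x, (‖f x‖₊ : ℝ≥0∞) ^ 2 ∂lam ≤
      4 * ∫⁻ x, (‖f x - h x‖₊ : ℝ≥0∞) ^ 2 ∂lam + 4 * ∫⁻ x, (‖h x‖₊ : ℝ≥0∞) ^ 2 ∂lam := by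
  rw [← aux_eLpNorm_sq, ← aux_eLpNorm_sq, ← aux_eLpNorm_sq]
  have htri : eLpNorm f 2 lam ≤ eLpNorm (fun x => f x - h x) 2 lam + eLpNorm h 2 lam := by
    have : f = (fun x => f x - h x) + h := funext fun x => by simp
    nth_rewrite 1 [this]
    exact eLpNorm_add_le (hf.sub hh) hh one_le_two
  calc eLpNorm f 2 lam ^ 2 ≤ (eLpNorm (fun x => f x - h x) 2 lam + eLpNorm h 2 lam) ^ 2 := by
        gcongr
    _ ≤ _ := aux_sq_add_le _ _
end auxclos


/-- A sequence in the a priori domain `D` of a gradient-type form is admissible for a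
measure `lam` if its members are in `L²(lam)`, have finite energy, the sequence is Cauchy
in energy and tends to zero in `L²(lam)`. -/
def EnergyAdmissible {X : Type*} [MeasurableSpace X]
    {H : Type*} [NormedAddCommGroup H] [InnerProductSpace ℝ H]
    (D : Submodule ℝ (X → ℝ)) (G : D →ₗ[ℝ] (X → H))
    (lam : Measure X) (φ : ℕ → D) : Prop :=
  (∀ j, MemLp (φ j : X → ℝ) 2 lam) ∧
  (∀ j, Integrable (fun x => ‖G (φ j) x‖ ^ 2) lam) ∧
  Tendsto (fun p : ℕ × ℕ => ∫ x, ‖G (φ p.1 - φ p.2) x‖ ^ 2 ∂lam)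
    (atTop ×ˢ atTop) (nhds 0) ∧
  Tendsto (fun j => ∫ x, ((φ j : X → ℝ) x) ^ 2 ∂lam) atTop (nhds 0)

/-- The superposition (disintegration) closability principle: if for `ν`-almost every
fiber `κ s` of a disintegration the gradient-type form is closable on `L²(κ s)`
(expressed by the vanishing-energy sequence condition), then it is closable on `L²(μ)`
for the mixture `μ = ∫ κ s ν(ds)`. -/
theorem closability_of_superposition
    {X S : Type*} [MeasurableSpace X] [MeasurableSpace S]
    (ν : Measure S) [IsFiniteMeasure ν]
    (κ : ProbabilityTheory.Kernel S X) [ProbabilityTheory.IsFiniteKernel κ]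
    (μ : Measure X) (hμ : μ = ν.bind (fun s => κ s))
    {H : Type*} [NormedAddCommGroup H] [InnerProductSpace ℝ H]
    [SecondCountableTopology H] [CompleteSpace H] [MeasurableSpace H] [BorelSpace H]
    (D : Submodule ℝ (X → ℝ)) (G : D →ₗ[ℝ] (X → H))
    (hmeas : ∀ φ : D, Measurable (φ : X → ℝ))
    (hGmeas : ∀ φ : D, Measurable (G φ))
    (hfiber : ∀ᵐ s ∂ν, ∀ φ : ℕ → D, EnergyAdmissible D G (κ s) φ →
      Tendsto (fun j => ∫ x, ‖G (φ j) x‖ ^ 2 ∂(κ s)) atTop (nhds 0))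
    (φ : ℕ → D) (hφ : EnergyAdmissible D G μ φ) :
    Tendsto (fun j => ∫ x, ‖G (φ j) x‖ ^ 2 ∂μ) atTop (nhds 0) := by
  classical
  obtain ⟨hL2, hInt, hCauchy, hSmall⟩ := hφ
  set g : ℕ → X → H := fun k => G (φ k) with hg
  have hgd : ∀ k l, (G (φ k - φ l) : X → H) = fun x => g k x - g l x := fun k l => by
    rw [map_sub]; rfl
  have hgm : ∀ k, Measurable (g k) := fun k => hGmeas _
  have hgdm : ∀ k l, Measurable (fun x => g k x - g l x) := fun k l => (hgm k).sub (hgm l)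
  have hφm : ∀ k, Measurable (φ k : X → ℝ) := fun k => hmeas _
  -- measurable ennreal integrands
  have hgi : ∀ k, Measurable fun x => (‖g k x‖₊ : ℝ≥0∞) ^ 2 :=
    fun k => ((hgm k).nnnorm.coe_nnreal_ennreal).pow_const 2
  have hgdi : ∀ k l, Measurable fun x => (‖g k x - g l x‖₊ : ℝ≥0∞) ^ 2 :=
    fun k l => ((hgdm k l).nnnorm.coe_nnreal_ennreal).pow_const 2
  have hφi : ∀ k, Measurable fun x => (‖(φ k : X → ℝ) x‖₊ : ℝ≥0∞) ^ 2 :=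
    fun k => ((hφm k).nnnorm.coe_nnreal_ennreal).pow_const 2
  -- ennreal energies over μ
  set E : ℕ → ℝ≥0∞ := fun k => ∫⁻ x, (‖g k x‖₊ : ℝ≥0∞) ^ 2 ∂μ with hE
  set C : ℕ → ℕ → ℝ≥0∞ := fun k l => ∫⁻ x, (‖g k x - g l x‖₊ : ℝ≥0∞) ^ 2 ∂μ with hC
  set P : ℕ → ℝ≥0∞ := fun k => ∫⁻ x, (‖(φ k : X → ℝ) x‖₊ : ℝ≥0∞) ^ 2 ∂μ with hP
  have hEfin : ∀ k, E k ≠ ⊤ := by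
    intro k
    have h1 : E k = ∫⁻ x, (‖(‖g k x‖ ^ 2 : ℝ)‖₊ : ℝ≥0∞) ∂μ :=
      lintegral_congr fun x => (aux_nnnorm_sq _).symm
    rw [h1]
    exact (hInt k).2.ne
  have hPfin : ∀ k, P k ≠ ⊤ := by
    intro k
    have h1 : P k = eLpNorm (φ k : X → ℝ) 2 μ ^ 2 := (aux_eLpNorm_sq _).symm
    rw [h1]
    exact ENNReal.pow_ne_top (hL2 k).2.ne
  have hμNfin : ∀ k, eLpNorm (g k) 2 μ ≠ ⊤ := fun k =>
    aux_ne_top_of_sq (by rw [aux_eLpNorm_sq]; exact hEfin k)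
  have hCfin : ∀ k l, C k l ≠ ⊤ := by
    intro k l
    have h1 : C k l = eLpNorm (fun x => g k x - g l x) 2 μ ^ 2 := (aux_eLpNorm_sq _).symm
    rw [h1]
    refine ENNReal.pow_ne_top (ne_top_of_le_ne_top ?_ (eLpNorm_sub_le
      ((hgm k).aestronglyMeasurable) ((hgm l).aestronglyMeasurable) one_le_two))
    exact ENNReal.add_ne_top.2 ⟨hμNfin k, hμNfin l⟩
  have hCreal : ∀ k l, ∫ x, ‖G (φ k - φ l) x‖ ^ 2 ∂μ = (C k l).toReal := by
    intro k l
    rw [hgd k l]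
    exact aux_integral_norm_sq _ ((hgdm k l).aestronglyMeasurable)
  have hCtend : Tendsto (fun p : ℕ × ℕ => C p.1 p.2) (atTop ×ˢ atTop) (nhds 0) := by
    have h0 := ENNReal.tendsto_ofReal hCauchy
    rw [ENNReal.ofReal_zero] at h0
    convert h0 using 2 with p
    rw [hCreal, ENNReal.ofReal_toReal (hCfin _ _)]
  have hPtend : Tendsto P atTop (nhds 0) := by
    have h0 := ENNReal.tendsto_ofReal hSmall
    rw [ENNReal.ofReal_zero] at h0
    convert h0 using 2 with k
    rw [aux_integral_sq _ ((hφm k).aestronglyMeasurable),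
      ENNReal.ofReal_toReal (hPfin _)]
  -- subsequence extraction
  have hgeom_pos : ∀ n : ℕ, (0 : ℝ≥0∞) < (16)⁻¹ ^ n := fun n =>
    ENNReal.pow_pos (ENNReal.inv_pos.mpr (by norm_num)) n
  have hexists : ∀ n : ℕ, ∃ N : ℕ, (∀ k l, N ≤ k → N ≤ l → C k l ≤ (16 : ℝ≥0∞)⁻¹ ^ n) ∧
      ∀ k, N ≤ k → P k ≤ (16 : ℝ≥0∞)⁻¹ ^ n := by
    intro n
    have h1 : ∀ᶠ p : ℕ × ℕ in atTop ×ˢ atTop, C p.1 p.2 < (16 : ℝ≥0∞)⁻¹ ^ n :=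
      hCtend.eventually_lt_const (hgeom_pos n)
    rw [Filter.prod_atTop_atTop_eq, eventually_atTop] at h1
    obtain ⟨a, ha⟩ := h1
    have h2 : ∀ᶠ k in atTop, P k < (16 : ℝ≥0∞)⁻¹ ^ n :=
      hPtend.eventually_lt_const (hgeom_pos n)
    rw [eventually_atTop] at h2
    obtain ⟨b, hb⟩ := h2
    refine ⟨max (max a.1 a.2) b, fun k l hk hl => ?_, fun k hk => ?_⟩
    · exact (ha (k, l) ⟨le_trans ((le_max_left a.1 a.2).trans (le_max_left _ _)) hk,
        le_trans ((le_max_right a.1 a.2).trans (le_max_left _ _)) hl⟩).le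
    · exact (hb k (le_trans (le_max_right _ _) hk)).le
  choose M hM1 hM2 using hexists
  obtain ⟨j, hj0, hjs⟩ : ∃ j : ℕ → ℕ, j 0 = M 0 ∧ ∀ n, j (n + 1) = max (j n + 1) (M (n + 1)) :=
    ⟨fun n => Nat.rec (M 0) (fun n jn => max (jn + 1) (M (n + 1))) n, rfl, fun n => rfl⟩
  have hjmono : StrictMono j := strictMono_nat_of_lt_succ fun n => by
    rw [hjs n]; exact lt_of_lt_of_le (Nat.lt_succ_self _) (le_max_left _ _)
  have hjM : ∀ n, M n ≤ j n := by
    intro n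
    cases n with
    | zero => rw [hj0]
    | succ m => rw [hjs m]; exact le_max_right _ _
  have hCj : ∀ n k l, j n ≤ k → j n ≤ l → C k l ≤ (16 : ℝ≥0∞)⁻¹ ^ n :=
    fun n k l hk hl => hM1 n k l (le_trans (hjM n) hk) (le_trans (hjM n) hl)
  have hPj : ∀ n, P (j n) ≤ (16 : ℝ≥0∞)⁻¹ ^ n := fun n => hM2 n _ (hjM n)
  -- disintegration identity
  have hbind : ∀ f : X → ℝ≥0∞, Measurable f →
      ∫⁻ x, f x ∂μ = ∫⁻ s, ∫⁻ x, f x ∂(κ s) ∂ν := by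
    intro f hf; rw [hμ]; exact MeasureTheory.Measure.lintegral_bind κ.measurable.aemeasurable hf.aemeasurable
  -- fiber quantities
  set F : ℕ → S → ℝ≥0∞ := fun n s => ∫⁻ x, (‖g (j n) x‖₊ : ℝ≥0∞) ^ 2 ∂(κ s) with hF
  set Gf : ℕ → ℕ → S → ℝ≥0∞ :=
    fun n m s => ∫⁻ x, (‖g (j n) x - g (j m) x‖₊ : ℝ≥0∞) ^ 2 ∂(κ s) with hGf
  set Q : ℕ → S → ℝ≥0∞ := fun n s => ∫⁻ x, (‖(φ (j n) : X → ℝ) x‖₊ : ℝ≥0∞) ^ 2 ∂(κ s) with hQ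
  have hFmeas : ∀ n, Measurable (F n) := fun n =>
    (Measure.measurable_lintegral (hgi (j n))).comp κ.measurable
  have hGfmeas : ∀ n m, Measurable (Gf n m) := fun n m =>
    (Measure.measurable_lintegral (hgdi (j n) (j m))).comp κ.measurable
  have hQmeas : ∀ n, Measurable (Q n) := fun n =>
    (Measure.measurable_lintegral (hφi (j n))).comp κ.measurable
  have hFint : ∀ n, ∫⁻ s, F n s ∂ν = E (j n) := fun n => (hbind _ (hgi (j n))).symm
  have hGfint : ∀ n m, ∫⁻ s, Gf n m s ∂ν = C (j n) (j m) :=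
    fun n m => (hbind _ (hgdi (j n) (j m))).symm
  have hQint : ∀ n, ∫⁻ s, Q n s ∂ν = P (j n) := fun n => (hbind _ (hφi (j n))).symm
  -- geometric sums
  have hgeo16 : (∑' n : ℕ, (16 : ℝ≥0∞)⁻¹ ^ n) ≠ ⊤ := by
    rw [ENNReal.tsum_geometric]
    refine ENNReal.inv_ne_top.mpr ?_
    have : (16 : ℝ≥0∞)⁻¹ < 1 := ENNReal.inv_lt_one.mpr (by norm_num)
    exact (tsub_pos_iff_lt.mpr this).ne'
  have hgeo4 : (∑' n : ℕ, (4 : ℝ≥0∞)⁻¹ ^ n) ≠ ⊤ := by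
    rw [ENNReal.tsum_geometric]
    refine ENNReal.inv_ne_top.mpr ?_
    have : (4 : ℝ≥0∞)⁻¹ < 1 := ENNReal.inv_lt_one.mpr (by norm_num)
    exact (tsub_pos_iff_lt.mpr this).ne'
  have h416 : ∀ i : ℕ, (4 : ℝ≥0∞) ^ i * (16 : ℝ≥0∞)⁻¹ ^ i = (4 : ℝ≥0∞)⁻¹ ^ i := by
    intro i
    rw [← mul_pow]
    congr 1
    rw [show (16 : ℝ≥0∞) = 4 * 4 by norm_num,
      ENNReal.mul_inv (Or.inl (by norm_num)) (Or.inl (by norm_num)), ← mul_assoc,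
      ENNReal.mul_inv_cancel (by norm_num) (by norm_num), one_mul]
  -- a.e. facts
  have haeQ : ∀ᵐ s ∂ν, (∑' n, Q n s) ≠ ⊤ := by
    have hsum : ∫⁻ s, ∑' n, Q n s ∂ν ≠ ⊤ := by
      rw [lintegral_tsum fun n => (hQmeas n).aemeasurable]
      refine ne_top_of_le_ne_top hgeo16 (ENNReal.tsum_le_tsum fun n => ?_)
      rw [hQint n]; exact hPj n
    filter_upwards [ae_lt_top (Measurable.ennreal_tsum hQmeas) hsum] with s hs using hs.ne
  have haeF : ∀ᵐ s ∂ν, ∀ n, F n s ≠ ⊤ := by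
    rw [ae_all_iff]
    intro n
    filter_upwards [ae_lt_top (hFmeas n) (by rw [hFint n]; exact hEfin (j n))] with s hs using hs.ne
  set B : S → ℝ≥0∞ := fun s => ∑' i, 4 ^ i * Gf i (i + 1) s with hB
  have haeB : ∀ᵐ s ∂ν, B s ≠ ⊤ := by
    have hsum : ∫⁻ s, B s ∂ν ≠ ⊤ := by
      rw [hB]
      rw [lintegral_tsum fun i => ((hGfmeas i (i + 1)).const_mul _).aemeasurable]
      refine ne_top_of_le_ne_top hgeo4 (ENNReal.tsum_le_tsum fun i => ?_)
      rw [lintegral_const_mul _ (hGfmeas i (i + 1)), hGfint]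
      calc (4 : ℝ≥0∞) ^ i * C (j i) (j (i + 1)) ≤ 4 ^ i * (16 : ℝ≥0∞)⁻¹ ^ i := by
            gcongr
            exact hCj i (j i) (j (i + 1)) le_rfl (hjmono.monotone (Nat.le_succ i))
        _ = (4 : ℝ≥0∞)⁻¹ ^ i := h416 i
    filter_upwards [ae_lt_top (Measurable.ennreal_tsum fun i => (hGfmeas i (i + 1)).const_mul _)
      hsum] with s hs using hs.ne
  -- pointwise energy triangle (fiberwise, every s)
  have hFGF : ∀ s n m, F n s ≤ 4 * Gf n m s + 4 * F m s := fun s n m =>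
    aux_energy_triangle (g (j n)) (g (j m)) ((hgm _).aestronglyMeasurable)
      ((hgm _).aestronglyMeasurable)
  -- a.e. convergence of fiber energies along the subsequence
  have main_ae : ∀ᵐ s ∂ν, Tendsto (fun n => F n s) atTop (nhds 0) := by
    filter_upwards [haeQ, haeF, haeB, hfiber] with s hQs hFs hBs hfib
    have hQfin : ∀ n, Q n s ≠ ⊤ := fun n => ne_top_of_le_ne_top hQs (ENNReal.le_tsum n)
    -- consecutive differences bound
    have hcons : ∀ i, Gf i (i + 1) s ≤ B s * (4 : ℝ≥0∞)⁻¹ ^ i := by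
      intro i
      have h1 : 4 ^ i * Gf i (i + 1) s ≤ B s := ENNReal.le_tsum i
      calc Gf i (i + 1) s = 4 ^ i * Gf i (i + 1) s * (4 : ℝ≥0∞)⁻¹ ^ i := by
            rw [mul_comm ((4 : ℝ≥0∞) ^ i), mul_assoc, ← mul_pow,
              ENNReal.mul_inv_cancel (by norm_num) (by norm_num), one_pow, mul_one]
        _ ≤ B s * (4 : ℝ≥0∞)⁻¹ ^ i := by gcongr
    have hαd : ∀ n m, eLpNorm (fun x => g (j n) x - g (j m) x) 2 (κ s) ^ 2 = Gf n m s :=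
      fun n m => aux_eLpNorm_sq _
    set K : ℝ≥0∞ := B s ^ ((1 : ℝ) / 2) with hK
    have hKfin : K ≠ ⊤ := ENNReal.rpow_ne_top_of_nonneg (by norm_num) hBs
    have hKsq : K ^ 2 = B s := by
      rw [hK, ← ENNReal.rpow_natCast _ 2, ← ENNReal.rpow_mul]; norm_num
    have h2i : ∀ i : ℕ, ((2 : ℝ≥0∞)⁻¹ ^ i) ^ 2 = (4 : ℝ≥0∞)⁻¹ ^ i := by
      intro i
      rw [← pow_mul, mul_comm, pow_mul]
      congr 1
      rw [← ENNReal.inv_pow]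
      norm_num
    have hconsN : ∀ i, eLpNorm (fun x => g (j i) x - g (j (i + 1)) x) 2 (κ s) ≤
        K * (2 : ℝ≥0∞)⁻¹ ^ i := by
      intro i
      refine aux_le_of_sq_le_sq ?_
      rw [hαd]
      calc Gf i (i + 1) s ≤ B s * (4 : ℝ≥0∞)⁻¹ ^ i := hcons i
        _ = (K * (2 : ℝ≥0∞)⁻¹ ^ i) ^ 2 := by rw [mul_pow, hKsq, h2i]
    -- telescoping
    have htel : ∀ n m, n ≤ m → eLpNorm (fun x => g (j n) x - g (j m) x) 2 (κ s) ≤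
        ∑ i ∈ Finset.Ico n m, eLpNorm (fun x => g (j i) x - g (j (i + 1)) x) 2 (κ s) := by
      intro n m hnm
      induction m, hnm using Nat.le_induction with
      | base =>
        have h0 : (fun x => g (j n) x - g (j n) x) = (0 : X → H) := funext fun x => sub_self _
        simp [h0]
      | succ m hnm ih =>
        have hdecomp : (fun x => g (j n) x - g (j (m + 1)) x) =
            (fun x => g (j n) x - g (j m) x) + fun x => g (j m) x - g (j (m + 1)) x :=
          funext fun x => by simp
        calc eLpNorm (fun x => g (j n) x - g (j (m + 1)) x) 2 (κ s) ≤
            eLpNorm (fun x => g (j n) x - g (j m) x) 2 (κ s) +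
              eLpNorm (fun x => g (j m) x - g (j (m + 1)) x) 2 (κ s) := by
              rw [hdecomp]
              exact eLpNorm_add_le ((hgdm _ _).aestronglyMeasurable)
                ((hgdm _ _).aestronglyMeasurable) one_le_two
          _ ≤ (∑ i ∈ Finset.Ico n m, eLpNorm (fun x => g (j i) x - g (j (i + 1)) x) 2 (κ s)) +
              eLpNorm (fun x => g (j m) x - g (j (m + 1)) x) 2 (κ s) := add_le_add_left ih _
          _ = ∑ i ∈ Finset.Ico n (m + 1),
              eLpNorm (fun x => g (j i) x - g (j (i + 1)) x) 2 (κ s) :=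
              (Finset.sum_Ico_succ_top hnm _).symm
    -- geometric tail
    have hgeoIco : ∀ n m : ℕ, ∑ i ∈ Finset.Ico n m, ((2 : ℝ≥0∞)⁻¹) ^ i ≤ 2⁻¹ ^ n * 2 := by
      intro n m
      calc ∑ i ∈ Finset.Ico n m, ((2 : ℝ≥0∞)⁻¹) ^ i
          = ∑ i ∈ Finset.range (m - n), ((2 : ℝ≥0∞)⁻¹) ^ (n + i) := by
            rw [Finset.sum_Ico_eq_sum_range]
        _ ≤ ∑' i : ℕ, ((2 : ℝ≥0∞)⁻¹) ^ (n + i) := ENNReal.sum_le_tsum _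
        _ = 2⁻¹ ^ n * 2 := by
            simp_rw [pow_add]
            rw [ENNReal.tsum_mul_left, ENNReal.tsum_geometric, ENNReal.one_sub_inv_two, inv_inv]
    have hbound : ∀ n m, n ≤ m →
        eLpNorm (fun x => g (j n) x - g (j m) x) 2 (κ s) ≤ K * 2 * (2 : ℝ≥0∞)⁻¹ ^ n := by
      intro n m hnm
      calc eLpNorm (fun x => g (j n) x - g (j m) x) 2 (κ s)
          ≤ ∑ i ∈ Finset.Ico n m, eLpNorm (fun x => g (j i) x - g (j (i + 1)) x) 2 (κ s) :=
            htel n m hnm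
        _ ≤ ∑ i ∈ Finset.Ico n m, K * (2 : ℝ≥0∞)⁻¹ ^ i :=
            Finset.sum_le_sum fun i _ => hconsN i
        _ = K * ∑ i ∈ Finset.Ico n m, (2 : ℝ≥0∞)⁻¹ ^ i := by rw [Finset.mul_sum]
        _ ≤ K * (2⁻¹ ^ n * 2) := by gcongr; exact hgeoIco n m
        _ = K * 2 * (2 : ℝ≥0∞)⁻¹ ^ n := by ring
    have hsymm : ∀ n m, eLpNorm (fun x => g (j n) x - g (j m) x) 2 (κ s) =
        eLpNorm (fun x => g (j m) x - g (j n) x) 2 (κ s) := by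
      intro n m
      have h0 : (fun x => g (j n) x - g (j m) x) = -fun x => g (j m) x - g (j n) x :=
        funext fun x => (neg_sub _ _).symm
      rw [h0, eLpNorm_neg]
    have hboundmin : ∀ n m, Gf n m s ≤ (K * 2) ^ 2 * (4 : ℝ≥0∞)⁻¹ ^ min n m := by
      intro n m
      have key : ∀ n m, n ≤ m → Gf n m s ≤ (K * 2) ^ 2 * (4 : ℝ≥0∞)⁻¹ ^ n := by
        intro a b hab
        calc Gf a b s = eLpNorm (fun x => g (j a) x - g (j b) x) 2 (κ s) ^ 2 := (hαd a b).symm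
          _ ≤ (K * 2 * (2 : ℝ≥0∞)⁻¹ ^ a) ^ 2 := by gcongr; exact hbound a b hab
          _ = (K * 2) ^ 2 * (4 : ℝ≥0∞)⁻¹ ^ a := by rw [mul_pow, h2i]
      rcases le_total n m with h | h
      · rw [min_eq_left h]; exact key n m h
      · rw [min_eq_right h]
        have heq : Gf n m s = Gf m n s := by rw [← hαd, ← hαd, hsymm]
        rw [heq]; exact key m n h
    -- fiber Cauchy in energy (ennreal)
    have hGf0 : Tendsto (fun p : ℕ × ℕ => Gf p.1 p.2 s) (atTop ×ˢ atTop) (nhds 0) := by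
      rw [Filter.prod_atTop_atTop_eq, ENNReal.tendsto_atTop_zero]
      intro ε hε
      have hK2 : (K * 2) ^ 2 ≠ ⊤ := ENNReal.pow_ne_top (ENNReal.mul_ne_top hKfin (by norm_num))
      have htends : Tendsto (fun N => (K * 2) ^ 2 * (4 : ℝ≥0∞)⁻¹ ^ N) atTop (nhds 0) := by
        have h0 := ENNReal.Tendsto.const_mul
          (ENNReal.tendsto_pow_atTop_nhds_zero_of_lt_one
            (ENNReal.inv_lt_one.mpr (by norm_num : (1:ℝ≥0∞) < 4))) (Or.inr hK2)
        simpa using h0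
      obtain ⟨N, hN⟩ := ENNReal.tendsto_atTop_zero.mp htends ε hε
      refine ⟨(N, N), fun p hp => ?_⟩
      have hmin : N ≤ min p.1 p.2 := le_min hp.1 hp.2
      calc Gf p.1 p.2 s ≤ (K * 2) ^ 2 * (4 : ℝ≥0∞)⁻¹ ^ min p.1 p.2 := hboundmin _ _
        _ ≤ (K * 2) ^ 2 * (4 : ℝ≥0∞)⁻¹ ^ N := mul_le_mul_right
            (pow_le_pow_of_le_one (by simp) (ENNReal.inv_le_one.mpr (by norm_num)) hmin) _
        _ ≤ ε := hN N le_rfl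
    -- admissibility of the subsequence on the fiber
    have hmem : ∀ n, MemLp (φ (j n) : X → ℝ) 2 (κ s) := by
      intro n
      refine ⟨(hφm (j n)).aestronglyMeasurable, ?_⟩
      have h2 : eLpNorm (φ (j n) : X → ℝ) 2 (κ s) ^ 2 = Q n s := aux_eLpNorm_sq _
      exact lt_top_iff_ne_top.mpr (aux_ne_top_of_sq (h2 ▸ hQfin n))
    have hintf : ∀ n, Integrable (fun x => ‖G (φ (j n)) x‖ ^ 2) (κ s) := by
      intro n
      refine ⟨((hgm (j n)).norm.pow_const 2).aestronglyMeasurable, ?_⟩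
      rw [hasFiniteIntegral_def]
      have heq : ∫⁻ x, (‖(‖g (j n) x‖ ^ 2 : ℝ)‖₊ : ℝ≥0∞) ∂(κ s) = F n s :=
        lintegral_congr fun x => aux_nnnorm_sq _
      exact heq ▸ lt_top_iff_ne_top.mpr (hFs n)
    have hcau : Tendsto (fun p : ℕ × ℕ => ∫ x, ‖G (φ (j p.1) - φ (j p.2)) x‖ ^ 2 ∂(κ s))
        (atTop ×ˢ atTop) (nhds 0) := by
      have h1 := (ENNReal.tendsto_toReal (a := 0) (by simp)).comp hGf0
      simp only [Function.comp_def, ENNReal.toReal_zero] at h1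
      convert h1 using 2 with p
      rw [hgd]
      exact aux_integral_norm_sq _ ((hgdm _ _).aestronglyMeasurable)
    have hsmallf : Tendsto (fun n => ∫ x, ((φ (j n) : X → ℝ) x) ^ 2 ∂(κ s)) atTop (nhds 0) := by
      have hQ0 : Tendsto (fun n => Q n s) atTop (nhds 0) :=
        ENNReal.tendsto_atTop_zero_of_tsum_ne_top hQs
      have h1 := (ENNReal.tendsto_toReal (a := 0) (by simp)).comp hQ0
      simp only [Function.comp_def, ENNReal.toReal_zero] at h1
      convert h1 using 2 with n
      exact aux_integral_sq _ ((hφm (j n)).aestronglyMeasurable)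
    have hreal := hfib (fun n => φ (j n)) ⟨hmem, hintf, hcau, hsmallf⟩
    have h1 := ENNReal.tendsto_ofReal hreal
    rw [ENNReal.ofReal_zero] at h1
    convert h1 using 2 with n
    rw [aux_integral_norm_sq _ ((hgm (j n)).aestronglyMeasurable),
      ENNReal.ofReal_toReal (hFs n)]
  -- Fatou-type argument: energies along the subsequence tend to zero
  have hfatou : ∀ n, E (j n) ≤ 4 * (16 : ℝ≥0∞)⁻¹ ^ n := by
    intro n
    have hptw : ∀ᵐ s ∂ν, F n s ≤ liminf (fun m => 4 * Gf n m s) atTop := by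
      filter_upwards [main_ae] with s hs
      refine ENNReal.le_of_forall_pos_le_add fun ε hε hfin => ?_
      have hev : ∀ᶠ m in atTop, F m s ≤ (ε : ℝ≥0∞) / 4 :=
        hs.eventually_le_const (ENNReal.div_pos (by exact_mod_cast hε.ne') (by norm_num))
      have hev2 : ∀ᶠ m in atTop, F n s - ε ≤ 4 * Gf n m s := by
        filter_upwards [hev] with m hm
        rw [tsub_le_iff_right]
        calc F n s ≤ 4 * Gf n m s + 4 * F m s := hFGF s n m
          _ ≤ 4 * Gf n m s + 4 * ((ε : ℝ≥0∞) / 4) := by gcongr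
          _ = 4 * Gf n m s + ε := by
              rw [ENNReal.mul_div_cancel' (by norm_num) (by norm_num)]
      exact tsub_le_iff_right.mp (le_liminf_of_le (by isBoundedDefault) hev2)
    calc E (j n) = ∫⁻ s, F n s ∂ν := (hFint n).symm
      _ ≤ ∫⁻ s, liminf (fun m => 4 * Gf n m s) atTop ∂ν := lintegral_mono_ae hptw
      _ ≤ liminf (fun m => ∫⁻ s, 4 * Gf n m s ∂ν) atTop :=
          lintegral_liminf_le fun m => (hGfmeas n m).const_mul 4
      _ = liminf (fun m => 4 * C (j n) (j m)) atTop := by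
          have heq : (fun m => ∫⁻ s, 4 * Gf n m s ∂ν) = fun m => 4 * C (j n) (j m) :=
            funext fun m => by rw [lintegral_const_mul _ (hGfmeas n m), hGfint]
          rw [heq]
      _ ≤ 4 * (16 : ℝ≥0∞)⁻¹ ^ n := by
          refine liminf_le_of_frequently_le' ((eventually_atTop.mpr ⟨n, fun m hm => ?_⟩).frequently)
          exact mul_le_mul_right (hCj n (j n) (j m) le_rfl (hjmono.monotone hm)) 4
  -- from the subsequence to the full sequence
  have hEtri : ∀ k l, E k ≤ 4 * C k l + 4 * E l := fun k l =>
    aux_energy_triangle (g k) (g l) ((hgm k).aestronglyMeasurable) ((hgm l).aestronglyMeasurable)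
  have hEall : ∀ n k, j n ≤ k → E k ≤ 4 * (16 : ℝ≥0∞)⁻¹ ^ n := by
    intro n k hk
    refine ENNReal.le_of_forall_pos_le_add fun ε hε hfin => ?_
    have htend : Tendsto (fun m => (16 : ℝ≥0∞) * 16⁻¹ ^ m) atTop (nhds 0) := by
      have h0 := ENNReal.Tendsto.const_mul
        (ENNReal.tendsto_pow_atTop_nhds_zero_of_lt_one
          (ENNReal.inv_lt_one.mpr (by norm_num : (1 : ℝ≥0∞) < 16)))
        (Or.inr (by norm_num : (16 : ℝ≥0∞) ≠ ⊤))
      simpa using h0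
    have hev : ∀ᶠ m in atTop, (16 : ℝ≥0∞) * 16⁻¹ ^ m ≤ ε :=
      htend.eventually_le_const (ENNReal.coe_pos.mpr hε)
    obtain ⟨m, hm1, hm2⟩ := (hev.and (eventually_ge_atTop n)).exists
    calc E k ≤ 4 * C k (j m) + 4 * E (j m) := hEtri k (j m)
      _ ≤ 4 * (16 : ℝ≥0∞)⁻¹ ^ n + 4 * (4 * 16⁻¹ ^ m) := by
          gcongr
          · exact hCj n k (j m) hk (hjmono.monotone hm2)
          · exact hfatou m
      _ = 4 * (16 : ℝ≥0∞)⁻¹ ^ n + 16 * 16⁻¹ ^ m := by ring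
      _ ≤ 4 * (16 : ℝ≥0∞)⁻¹ ^ n + ε := add_le_add_right hm1 _
  -- conclusion
  have hE0 : Tendsto E atTop (nhds 0) := by
    rw [ENNReal.tendsto_atTop_zero]
    intro ε hε
    have htend : Tendsto (fun n => (4 : ℝ≥0∞) * 16⁻¹ ^ n) atTop (nhds 0) := by
      have h0 := ENNReal.Tendsto.const_mul
        (ENNReal.tendsto_pow_atTop_nhds_zero_of_lt_one
          (ENNReal.inv_lt_one.mpr (by norm_num : (1 : ℝ≥0∞) < 16)))
        (Or.inr (by norm_num : (4 : ℝ≥0∞) ≠ ⊤))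
      simpa using h0
    obtain ⟨n, hn⟩ := (htend.eventually_le_const hε).exists
    exact ⟨j n, fun k hk => (hEall n k hk).trans hn⟩
  have hfinal := (ENNReal.tendsto_toReal (a := 0) (by simp)).comp hE0
  simp only [Function.comp_def, ENNReal.toReal_zero] at hfinal
  convert hfinal using 2 with k
  exact aux_integral_norm_sq _ ((hgm k).aestronglyMeasurable)
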